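/- Let J₁ = −1/2, J₂ = (1+√2)/2, J₃ = √2/2, and set E₀ := −1 − √2, E₁ := 0, E₂ := 1, E₃ := √2, E₄ := (10 + √2)/8. Define D : [E₀, E₄] → ℝ piecewise by D(ε) := 3/(2√2) − √((10+√2)/8 − ε)/√(2+√2) for E₀ ≤ ε ≤ E₁; D(ε) := √2 − 1 for E₁ ≤ ε ≤ E₂; D(ε) := √((10+√2)/8 − ε)/√(2+√2) + 3/(2√2) − 1 for E₂ ≤ ε ≤ E₃; and D(ε) := √(4 − 2√2)·√((10+√2)/8 − ε) for E₃ ≤ ε ≤ E₄. Then ∫_{E₀}^{E₄} D(ε) dε = 1, ∫_{E₀}^{E₄} ε·D(ε) dε = 0, and ∫_{E₀}^{E₄} ε²·D(ε) dε = (3 + √2)/6. -/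

import Mathlib

/-- The normalized density of states of the classical spin triangle for the standard
couplings `J₁ = −1/2`, `J₂ = (1+√2)/2`, `J₃ = √2/2`, on `[E₀, E₄] = [−1−√2, (10+√2)/8]`,
with breakpoints `E₁ = 0`, `E₂ = 1`, `E₃ = √2`. -/
noncomputable def dosStandard (ε : ℝ) : ℝ :=
  if ε ≤ 0 then
    3 / (2 * Real.sqrt 2)
      - Real.sqrt ((10 + Real.sqrt 2) / 8 - ε) / Real.sqrt (2 + Real.sqrt 2)
  else if ε ≤ 1 then
    Real.sqrt 2 - 1
  else if ε ≤ Real.sqrt 2 then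
    Real.sqrt ((10 + Real.sqrt 2) / 8 - ε) / Real.sqrt (2 + Real.sqrt 2)
      + 3 / (2 * Real.sqrt 2) - 1
  else
    Real.sqrt (4 - 2 * Real.sqrt 2) * Real.sqrt ((10 + Real.sqrt 2) / 8 - ε)

/-!
In the coordinate `v ≥ 0` with `ε = E₄ - (2 + √2) v²` one has `√(E₄ - ε) / √(2 + √2) = v`, and
`√(4 - 2√2) = 2 / √(2 + √2)`, so on each of its four pieces `D` is affine in `v`: it equals
`3√2/4 - v`, `√2 - 1`, `v + 3√2/4 - 1` and `2v` respectively. The substitution therefore turns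
every moment `∫ ε ^ k D(ε) dε` into integrals of polynomials in `v`, and the breakpoints become
the points `v = 3√2/4, 1 - √2/4, √2/4, 3√2/4 - 1, 0` of `ℚ(√2)`; what remains is arithmetic
in `ℚ(√2)`.
-/

open Real intervalIntegral Set

theorem integral_pow_mul_sub_mul_sq_pow (c μ s t : ℝ) (n k : ℕ) :
    ∫ v in t..s, v ^ n * (c - μ * v ^ 2) ^ k =
      ∑ j ∈ Finset.range (k + 1), (k.choose j : ℝ) * (-μ) ^ j * c ^ (k - j) *
        ((s ^ (n + 2 * j + 1) - t ^ (n + 2 * j + 1)) / (n + 2 * j + 1)) := by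
  have expand : ∀ v : ℝ, v ^ n * (c - μ * v ^ 2) ^ k =
      ∑ j ∈ Finset.range (k + 1), (k.choose j : ℝ) * (-μ) ^ j * c ^ (k - j) * v ^ (n + 2 * j) := by
    intro v
    rw [sub_eq_neg_add, add_pow, Finset.mul_sum]
    refine Finset.sum_congr rfl fun j _ => ?_
    ring
  simp_rw [expand]
  rw [integral_finsetSum fun j _ => Continuous.intervalIntegrable (by fun_prop) _ _]
  refine Finset.sum_congr rfl fun j _ => ?_
  rw [intervalIntegral.integral_const_mul, integral_pow]
  push_cast
  ring

theorem integral_comp_sub_mul_sq {f : ℝ → ℝ} (hf : Continuous f) (c μ s t : ℝ) :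
    ∫ ε in (c - μ * s ^ 2)..(c - μ * t ^ 2), f ε =
      ∫ v in t..s, 2 * μ * v * f (c - μ * v ^ 2) := by
  have hφ : ∀ v ∈ uIcc s t, HasDerivAt (fun v => c - μ * v ^ 2) (-(2 * μ * v)) v := by
    intro v _
    refine (((hasDerivAt_pow 2 v).const_mul μ).const_sub c).congr_deriv ?_
    ring
  rw [← integral_comp_mul_deriv hφ (by fun_prop) hf, integral_symm,
    ← intervalIntegral.integral_neg]
  refine integral_congr fun v _ => ?_
  simp only [Function.comp_apply]
  ring

theorem sqrt_sub_sub_mul_sq_div {μ v : ℝ} (hμ : 0 < μ) (hv : 0 ≤ v) (c : ℝ) :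
    √((c - (c - μ * v ^ 2)) / μ) = v := by
  rw [sub_sub_cancel, mul_div_cancel_left₀ _ hμ.ne', sqrt_sq hv]

theorem integral_pow_mul_of_eq_add_mul_sqrt {f : ℝ → ℝ} {c μ α β s t x y : ℝ} (k : ℕ)
    (hμ : 0 < μ) (ht : 0 ≤ t) (hts : t ≤ s) (hx : c - μ * s ^ 2 = x) (hy : c - μ * t ^ 2 = y)
    (hf : ∀ ε ∈ Ioo x y, f ε = α + β * √((c - ε) / μ)) :
    ∫ ε in x..y, ε ^ k * f ε =
      α * ((y ^ (k + 1) - x ^ (k + 1)) / (k + 1)) +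
        β * (2 * μ * ∫ v in t..s, v ^ 2 * (c - μ * v ^ 2) ^ k) := by
  have hxy : x ≤ y := by
    rw [← hx, ← hy]
    have := pow_le_pow_left₀ ht hts 2
    nlinarith
  have hsqrt : ∫ ε in x..y, ε ^ k * √((c - ε) / μ) =
      2 * μ * ∫ v in t..s, v ^ 2 * (c - μ * v ^ 2) ^ k := by
    rw [← hx, ← hy, integral_comp_sub_mul_sq (by fun_prop), ← intervalIntegral.integral_const_mul]
    refine integral_congr fun v hv => ?_
    rw [uIcc_of_le hts] at hv
    rw [sqrt_sub_sub_mul_sq_div hμ (ht.trans hv.1)]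
    ring
  calc ∫ ε in x..y, ε ^ k * f ε
      = ∫ ε in x..y, (α * ε ^ k + β * (ε ^ k * √((c - ε) / μ))) :=
        integral_congr_Ioo_of_le hxy fun ε hε => by rw [hf ε hε]; ring
    _ = _ := by
        rw [intervalIntegral.integral_add (Continuous.intervalIntegrable (by fun_prop) _ _)
          (Continuous.intervalIntegrable (by fun_prop) _ _), intervalIntegral.integral_const_mul,
          intervalIntegral.integral_const_mul, integral_pow, hsqrt]

local notation "E₄" => ((10 + √2) / 8 : ℝ)

theorem sq_sqrt_two : √2 ^ 2 = 2 := sq_sqrt zero_le_two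

theorem sqrt_four_sub_two_mul_sqrt_two_mul (x : ℝ) :
    √(4 - 2 * √2) * √x = 2 * √(x / (2 + √2)) := by
  have h : 0 ≤ 4 - 2 * √2 := by nlinarith [sq_sqrt_two, sqrt_nonneg 2]
  have key : (4 - 2 * √2) * x = 2 ^ 2 * (x / (2 + √2)) := by
    field_simp
    linear_combination (-2 * x) * sq_sqrt_two
  rw [← sqrt_mul h, key, sqrt_mul (sq_nonneg 2), sqrt_sq zero_le_two]

theorem dosStandard_eq (ε : ℝ) :
    dosStandard ε =
      if ε ≤ 0 then 3 * √2 / 4 - √((E₄ - ε) / (2 + √2))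
      else if ε ≤ 1 then √2 - 1
      else if ε ≤ √2 then √((E₄ - ε) / (2 + √2)) + 3 * √2 / 4 - 1
      else 2 * √((E₄ - ε) / (2 + √2)) := by
  have hA : 3 / (2 * √2) = 3 * √2 / 4 := by
    field_simp
    grind
  simp only [dosStandard, hA, sqrt_four_sub_two_mul_sqrt_two_mul,
    ← sqrt_div' _ (by positivity : (0 : ℝ) ≤ 2 + √2)]

theorem breakpoints_eq_sub_mul_sq :
    E₄ - (2 + √2) * (3 * √2 / 4) ^ 2 = -1 - √2 ∧ E₄ - (2 + √2) * (1 - √2 / 4) ^ 2 = 0 ∧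
      E₄ - (2 + √2) * (√2 / 4) ^ 2 = 1 ∧ E₄ - (2 + √2) * (3 * √2 / 4 - 1) ^ 2 = √2 := by
  have := sq_sqrt_two
  refine ⟨?_, ?_, ?_, ?_⟩ <;> grind

theorem continuous_dosStandard : Continuous dosStandard := by
  obtain ⟨-, h0, h1, h2⟩ := breakpoints_eq_sub_mul_sq
  have hv : ∀ {a x : ℝ}, 0 ≤ a → E₄ - (2 + √2) * a ^ 2 = x → √((E₄ - x) / (2 + √2)) = a :=
    fun ha hx => hx ▸ sqrt_sub_sub_mul_sq_div (by positivity) ha _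
  have := sq_sqrt_two
  rw [funext dosStandard_eq]
  refine Continuous.if_le (by fun_prop) (Continuous.if_le continuous_const
    (Continuous.if_le (by fun_prop) (by fun_prop) continuous_id continuous_const ?_)
    continuous_id continuous_const ?_) continuous_id continuous_const ?_
  · rintro x rfl
    rw [hv (by nlinarith [sqrt_nonneg 2]) h2]
    grind
  · rintro x rfl
    rw [if_pos one_lt_sqrt_two.le, hv (by positivity) h1]
    grind
  · rintro x rfl
    rw [if_pos zero_le_one, hv (by nlinarith) h0]
    grind

theorem integral_pow_mul_dosStandard (k : ℕ) :
    ∫ ε in (-1 - √2)..E₄, ε ^ k * dosStandard ε =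
      3 * √2 / 4 * ((0 ^ (k + 1) - (-1 - √2) ^ (k + 1)) / (k + 1)) +
        (√2 - 1) * ((1 - 0 ^ (k + 1)) / (k + 1)) +
        (3 * √2 / 4 - 1) * ((√2 ^ (k + 1) - 1) / (k + 1)) +
        2 * (2 + √2) *
          (-(∫ v in (1 - √2 / 4)..(3 * √2 / 4), v ^ 2 * (E₄ - (2 + √2) * v ^ 2) ^ k) +
            (∫ v in (3 * √2 / 4 - 1)..(√2 / 4), v ^ 2 * (E₄ - (2 + √2) * v ^ 2) ^ k) +
            2 * ∫ v in (0 : ℝ)..(3 * √2 / 4 - 1), v ^ 2 * (E₄ - (2 + √2) * v ^ 2) ^ k) := by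
  obtain ⟨hb₀, hb₁, hb₂, hb₃⟩ := breakpoints_eq_sub_mul_sq
  have hμ : (0 : ℝ) < 2 + √2 := by positivity
  have := sq_sqrt_two
  have := sqrt_nonneg 2
  have hint : ∀ a b : ℝ,
      IntervalIntegrable (fun ε => ε ^ k * dosStandard ε) MeasureTheory.volume a b :=
    fun a b => ((continuous_pow k).mul continuous_dosStandard).intervalIntegrable a b
  rw [← integral_add_adjacent_intervals (hint _ 0) (hint 0 _),
    ← integral_add_adjacent_intervals (hint 0 1) (hint 1 _),
    ← integral_add_adjacent_intervals (hint 1 √2) (hint √2 _),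
    integral_pow_mul_of_eq_add_mul_sqrt (α := 3 * √2 / 4) (β := -1) k hμ (by nlinarith)
      (by nlinarith) hb₀ hb₁ fun ε hε => by rw [dosStandard_eq, if_pos hε.2.le]; ring,
    integral_pow_mul_of_eq_add_mul_sqrt (α := √2 - 1) (β := 0) k hμ (by positivity)
      (by nlinarith) hb₁ hb₂ fun ε hε => by
        rw [dosStandard_eq, if_neg (not_le.2 hε.1), if_pos hε.2.le]; ring,
    integral_pow_mul_of_eq_add_mul_sqrt (α := 3 * √2 / 4 - 1) (β := 1) k hμ (by nlinarith)
      (by nlinarith) hb₂ hb₃ fun ε hε => by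
        rw [dosStandard_eq, if_neg (by linarith [hε.1]), if_neg (not_le.2 hε.1),
          if_pos hε.2.le]
        ring,
    integral_pow_mul_of_eq_add_mul_sqrt (α := 0) (β := 2) (t := 0) k hμ le_rfl
      (by nlinarith) hb₃ (by simp) fun ε hε => by
        rw [dosStandard_eq, if_neg (by linarith [hε.1, one_lt_sqrt_two]),
          if_neg (by linarith [hε.1, one_lt_sqrt_two]), if_neg (not_le.2 hε.1)]
        ring]
  ring

/-- the density of states `D` is normalized, its mean energy vanishes, and its
second energy moment equals `(3+√2)/6` (the high-temperature specific heat coefficient). -/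
theorem dos_moments :
    (∫ ε in (-1 - Real.sqrt 2)..((10 + Real.sqrt 2) / 8), dosStandard ε) = 1 ∧
    (∫ ε in (-1 - Real.sqrt 2)..((10 + Real.sqrt 2) / 8), ε * dosStandard ε) = 0 ∧
    (∫ ε in (-1 - Real.sqrt 2)..((10 + Real.sqrt 2) / 8), ε ^ 2 * dosStandard ε)
      = (3 + Real.sqrt 2) / 6 := by
  have h₀ := integral_pow_mul_dosStandard 0
  have h₁ := integral_pow_mul_dosStandard 1
  have h₂ := integral_pow_mul_dosStandard 2
  simp only [integral_pow_mul_sub_mul_sq_pow] at h₀ h₁ h₂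
  norm_num [Finset.sum_range_succ] at h₀ h₁ h₂
  rw [h₀, h₁, h₂]
  have := sq_sqrt_two
  refine ⟨?_, ?_, ?_⟩ <;> grind
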